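/- arXiv:1210.1433 — 2 statements merged into one kernel-verified Lean document; each statement's English description precedes it below -/
import Mathlib

section
/- (Composition of fibrations.) Let A, B, C be preorders, (dC, E, dB) a two-sided discrete fibration from B to C, and (dB', F, dA) a two-sided discrete fibration from A to B. Define E⊗F as the set of pairs (c, a) ∈ C × A such that there exist e ∈ E and f ∈ F with dC e = c, dA f = a and dB e = dB' f, equipped with the componentwise order and the two projection maps. Then E⊗F with its projections is a two-sided discrete fibration from A to C, and its associated relation is the composite S·R of the relations S and R associated with E and F: for all c, a, (c, a) ∈ E⊗F ↔ ∃ b ∈ B, R b a ∧ S c b, where R b a ↔ ∃ f ∈ F, dB' f = b ∧ dA f = a and S c b ↔ ∃ e ∈ E, dC e = c ∧ dB e = b. -/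
/-!
The composite `E ⊗ F` is the graph of the relation `S · R`, ordered componentwise. Lifting along
`E` in the `C`-direction and along `F` in the `A`-direction shows that this relation is monotone,
and the graph of any monotone relation is a two-sided discrete fibration.
-/

/-- `(dB, E, dA)` is a two-sided discrete fibration from the preorder `A` to
the preorder `B`. -/
def IsTwoSidedDiscreteFibration {E A B : Type*} [Preorder E] [Preorder A] [Preorder B]
    (dB : E → B) (dA : E → A) : Prop :=
  Monotone dB ∧ Monotone dA ∧
  (∀ (e : E) (b : B), b ≤ dB e → ∃! e' : E, dB e' = b ∧ dA e' = dA e ∧ e' ≤ e) ∧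
  (∀ (e : E) (a : A), dA e ≤ a → ∃! e'' : E, dA e'' = a ∧ dB e'' = dB e ∧ e ≤ e'') ∧
  (∀ e e' : E, e ≤ e' → ∃ m : E, dB m = dB e ∧ dA m = dA e' ∧ e ≤ m ∧ m ≤ e')

/-- A monotone relation from `A` to `B`; note the argument order `R b a`. -/
def IsMonotoneRel {A B : Type*} [Preorder A] [Preorder B] (R : B → A → Prop) : Prop :=
  ∀ ⦃b b' : B⦄ ⦃a a' : A⦄, b' ≤ b → a ≤ a' → R b a → R b' a'

/-- Lifts are unique because an element of the graph is determined by its two projections. -/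
theorem IsMonotoneRel.isTwoSidedDiscreteFibration {A B : Type*} [Preorder A] [Preorder B]
    {R : B → A → Prop} (hR : IsMonotoneRel R) :
    IsTwoSidedDiscreteFibration (E := {p : B × A // R p.1 p.2})
      (fun q => q.val.1) (fun q => q.val.2) := by
  have eq_of_proj : ∀ q q' : {p : B × A // R p.1 p.2}, q.val.1 = q'.val.1 → q.val.2 = q'.val.2 →
      q = q' := fun q q' h₁ h₂ => Subtype.ext (Prod.ext h₁ h₂)
  refine ⟨fun q q' h => h.1, fun q q' h => h.2, ?_, ?_, ?_⟩
  · rintro ⟨⟨b, a⟩, hq⟩ b' hb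
    exact ⟨⟨(b', a), hR hb le_rfl hq⟩, ⟨rfl, rfl, hb, le_rfl⟩,
      fun q' ⟨h₁, h₂, _⟩ => eq_of_proj _ _ h₁ h₂⟩
  · rintro ⟨⟨b, a⟩, hq⟩ a' ha
    exact ⟨⟨(b, a'), hR le_rfl ha hq⟩, ⟨rfl, rfl, le_rfl, ha⟩,
      fun q' ⟨h₂, h₁, _⟩ => eq_of_proj _ _ h₁ h₂⟩
  · rintro ⟨⟨b, a⟩, hq⟩ ⟨⟨b', a'⟩, _⟩ h
    exact ⟨⟨(b, a'), hR le_rfl h.2 hq⟩, rfl, rfl, ⟨le_rfl, h.2⟩, ⟨h.1, le_rfl⟩⟩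

namespace IsTwoSidedDiscreteFibration

variable {E A B : Type*} [Preorder E] [Preorder A] [Preorder B] {dB : E → B} {dA : E → A}

theorem exists_lift_of_le_left (h : IsTwoSidedDiscreteFibration dB dA) {e : E} {b : B}
    (hb : b ≤ dB e) : ∃ e' : E, dB e' = b ∧ dA e' = dA e :=
  let ⟨e', ⟨he'B, he'A, _⟩, _⟩ := h.2.2.1 e b hb
  ⟨e', he'B, he'A⟩

theorem exists_lift_of_le_right (h : IsTwoSidedDiscreteFibration dB dA) {e : E} {a : A}
    (ha : dA e ≤ a) : ∃ e' : E, dA e' = a ∧ dB e' = dB e :=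
  let ⟨e', ⟨he'A, he'B, _⟩, _⟩ := h.2.2.2.1 e a ha
  ⟨e', he'A, he'B⟩

theorem isMonotoneRel_comp {F C : Type*} [Preorder F] [Preorder C]
    {dC : E → C} {dB' : F → B} {dA : F → A}
    (hE : IsTwoSidedDiscreteFibration dC dB) (hF : IsTwoSidedDiscreteFibration dB' dA) :
    IsMonotoneRel fun c a => ∃ (e : E) (f : F), dC e = c ∧ dA f = a ∧ dB e = dB' f := by
  rintro c c' a a' hc ha ⟨e, f, rfl, rfl, hef⟩
  obtain ⟨e', he'C, he'B⟩ := hE.exists_lift_of_le_left hc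
  obtain ⟨f', hf'A, hf'B⟩ := hF.exists_lift_of_le_right ha
  exact ⟨e', f', he'C, hf'A, by rw [he'B, hf'B, hef]⟩

end IsTwoSidedDiscreteFibration

/-- (Composition of fibrations.)  Given a two-sided discrete fibration
`(dC, E, dB)` from `B` to `C` and a two-sided discrete fibration `(dB', F, dA)`
from `A` to `B`, the set `E ⊗ F` of pairs `(c, a)` admitting a matching pair of
elements of `E` and `F`, ordered componentwise with the two projections, is a
two-sided discrete fibration from `A` to `C`, and its associated relation is
the composite `S · R` of the relations associated with `E` and `F`. -/
theorem composition_of_fibrations {E F A B C : Type*}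
    [Preorder E] [Preorder F] [Preorder A] [Preorder B] [Preorder C]
    (dC : E → C) (dB : E → B) (dB' : F → B) (dA : F → A)
    (hE : IsTwoSidedDiscreteFibration dC dB)
    (hF : IsTwoSidedDiscreteFibration dB' dA) :
    IsTwoSidedDiscreteFibration
      (E := {p : C × A // ∃ (e : E) (f : F), dC e = p.1 ∧ dA f = p.2 ∧ dB e = dB' f})
      (fun q => q.val.1) (fun q => q.val.2) ∧
    (∀ (c : C) (a : A),
      (∃ (e : E) (f : F), dC e = c ∧ dA f = a ∧ dB e = dB' f) ↔
      (∃ b : B, (∃ f : F, dB' f = b ∧ dA f = a) ∧ (∃ e : E, dC e = c ∧ dB e = b))) := by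
  refine ⟨(hE.isMonotoneRel_comp hF).isTwoSidedDiscreteFibration, fun c a => ⟨?_, ?_⟩⟩
  · rintro ⟨e, f, hc, ha, hb⟩
    exact ⟨dB e, ⟨f, hb.symm, ha⟩, e, hc, rfl⟩
  · rintro ⟨b, ⟨f, rfl, ha⟩, e, hc, hb⟩
    exact ⟨e, f, hc, ha, hb⟩
end

section
/- (Egli-Milner description of the convex powerset lifting.) Let A and B be partial orders and R a monotone relation from A to B. Let E = {(b, a) ∈ B × A | R b a} with the componentwise order and projections dB : E → B, dA : E → A. Then for all order-convex subsets S ⊆ B and T ⊆ A the following are equivalent: (1) there exists an order-convex subset W ⊆ E with S ≤EM (dB '' W) in B and (dA '' W) ≤EM T in A; (2) (∀ a ∈ T, ∃ b ∈ S, R b a) and (∀ b ∈ S, ∃ a ∈ T, R b a). -/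
/-!
Given a witness `W`, every `b ∈ S` lies below the first component of some `e ∈ W`, whose second
component lies below some `a ∈ T`; monotonicity of `R` transports `R e.1 e.2` to `R b a`, and
dually for `a ∈ T`. Conversely, the pairs of `R` lying over `upperClosure S × lowerClosure T`
form an order-convex witness: its projections contain `S` and `T` by the Egli-Milner-style
condition and are contained in the respective closures by construction.
-/

section EgliMilner

variable {X : Type*} [Preorder X]

def EgliMilnerLE (S T : Set X) : Prop :=
  (∀ s ∈ S, ∃ t ∈ T, s ≤ t) ∧ (∀ t ∈ T, ∃ s ∈ S, s ≤ t)

theorem egliMilnerLE_of_subset_of_subset_upperClosure {S T : Set X} (hST : S ⊆ T)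
    (hT : T ⊆ upperClosure S) : EgliMilnerLE S T :=
  ⟨fun s hs => ⟨s, hST hs, le_rfl⟩, fun _ ht => mem_upperClosure.1 (hT ht)⟩

theorem egliMilnerLE_of_subset_lowerClosure_of_subset {S T : Set X} (hS : S ⊆ lowerClosure T)
    (hTS : T ⊆ S) : EgliMilnerLE S T :=
  ⟨fun _ hs => mem_lowerClosure.1 (hS hs), fun t ht => ⟨t, hTS ht, le_rfl⟩⟩

end EgliMilner

section MonotoneRelation

variable {A B : Type*} [Preorder A] [Preorder B] {R : B → A → Prop}

theorem forall_exists_rel_of_egliMilnerLE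
    (hR : ∀ b a, R b a → ∀ b' : B, b' ≤ b → ∀ a' : A, a ≤ a' → R b' a')
    {S : Set B} {T : Set A} {W : Set {p : B × A // R p.1 p.2}}
    (hSW : EgliMilnerLE S ((fun e => e.val.1) '' W))
    (hWT : EgliMilnerLE ((fun e => e.val.2) '' W) T) :
    (∀ a ∈ T, ∃ b ∈ S, R b a) ∧ (∀ b ∈ S, ∃ a ∈ T, R b a) := by
  constructor
  · intro a ha
    obtain ⟨-, ⟨e, he, rfl⟩, hea⟩ := hWT.2 a ha
    obtain ⟨b, hb, hbe⟩ := hSW.2 e.val.1 ⟨e, he, rfl⟩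
    exact ⟨b, hb, hR _ _ e.prop b hbe a hea⟩
  · intro b hb
    obtain ⟨-, ⟨e, he, rfl⟩, hbe⟩ := hSW.1 b hb
    obtain ⟨a, ha, hea⟩ := hWT.1 e.val.2 ⟨e, he, rfl⟩
    exact ⟨a, ha, hR _ _ e.prop b hbe a hea⟩

variable (R) in
def relBetweenClosures (S : Set B) (T : Set A) : Set {p : B × A // R p.1 p.2} :=
  {e | e.val.1 ∈ upperClosure S ∧ e.val.2 ∈ lowerClosure T}

theorem ordConnected_relBetweenClosures (S : Set B) (T : Set A) :
    (relBetweenClosures R S T).OrdConnected :=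
  ((upperClosure S).upper.ordConnected.preimage_mono
      (monotone_fst.comp (Subtype.mono_coe _))).inter
    ((lowerClosure T).lower.ordConnected.preimage_mono
      (monotone_snd.comp (Subtype.mono_coe _)))

theorem egliMilnerLE_fst_image_relBetweenClosures {S : Set B} {T : Set A}
    (hST : ∀ b ∈ S, ∃ a ∈ T, R b a) :
    EgliMilnerLE S ((fun e => e.val.1) '' relBetweenClosures R S T) := by
  refine egliMilnerLE_of_subset_of_subset_upperClosure (fun b hb => ?_) ?_
  · obtain ⟨a, ha, hba⟩ := hST b hb
    exact ⟨⟨(b, a), hba⟩, ⟨subset_upperClosure hb, subset_lowerClosure ha⟩, rfl⟩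
  · rintro _ ⟨e, he, rfl⟩
    exact he.1

theorem egliMilnerLE_snd_image_relBetweenClosures {S : Set B} {T : Set A}
    (hTS : ∀ a ∈ T, ∃ b ∈ S, R b a) :
    EgliMilnerLE ((fun e => e.val.2) '' relBetweenClosures R S T) T := by
  refine egliMilnerLE_of_subset_lowerClosure_of_subset ?_ (fun a ha => ?_)
  · rintro _ ⟨e, he, rfl⟩
    exact he.2
  · obtain ⟨b, hb, hba⟩ := hTS a ha
    exact ⟨⟨(b, a), hba⟩, ⟨subset_upperClosure hb, subset_lowerClosure ha⟩, rfl⟩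

end MonotoneRelation

/-- (Egli-Milner description of the convex powerset lifting.)  Let `R` be a
monotone relation from a poset `A` to a poset `B`, with associated two-sided
discrete fibration vertex `E = {(b, a) | R b a}` and projections `dB`, `dA`.
For order-convex `S ⊆ B` and `T ⊆ A`, the lifted relation relates `S` and `T`
iff the Egli-Milner-style condition holds. -/
theorem convex_powerset_lifting_egli_milner {A B : Type*}
    [PartialOrder A] [PartialOrder B]
    (R : B → A → Prop)
    (hR : ∀ b a, R b a → ∀ b' : B, b' ≤ b → ∀ a' : A, a ≤ a' → R b' a') :
    ∀ S : Set B, S.OrdConnected → ∀ T : Set A, T.OrdConnected →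
      ((∃ W : Set {p : B × A // R p.1 p.2}, W.OrdConnected ∧
          ((∀ b ∈ S, ∃ b' ∈ (fun e => e.val.1) '' W, b ≤ b') ∧
           (∀ b' ∈ (fun e : {p : B × A // R p.1 p.2} => e.val.1) '' W, ∃ b ∈ S, b ≤ b')) ∧
          ((∀ a ∈ (fun e : {p : B × A // R p.1 p.2} => e.val.2) '' W, ∃ a' ∈ T, a ≤ a') ∧
           (∀ a' ∈ T, ∃ a ∈ (fun e : {p : B × A // R p.1 p.2} => e.val.2) '' W, a ≤ a'))) ↔
        ((∀ a ∈ T, ∃ b ∈ S, R b a) ∧ (∀ b ∈ S, ∃ a ∈ T, R b a))) := by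
  intro S _ T _
  constructor
  · rintro ⟨W, -, hSW, hWT⟩
    exact forall_exists_rel_of_egliMilnerLE hR hSW hWT
  · rintro ⟨hTS, hST⟩
    exact ⟨relBetweenClosures R S T, ordConnected_relBetweenClosures S T,
      egliMilnerLE_fst_image_relBetweenClosures hST,
      egliMilnerLE_snd_image_relBetweenClosures hTS⟩
end
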